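/- Let T be a tree of order m ≥ 2 and n ≥ 2. Then mr_+^R(K_n ∘ T) = mr_+^C(K_n ∘ T) = nm − n + 1, where K_n ∘ T is the corona product of the complete graph K_n with T. -/

import Mathlib

open scoped ComplexOrder

/-- The minimum positive semidefinite rank of a simple graph `G` over the field `𝕜`
(`𝕜 = ℝ` gives `mr₊^ℝ`, `𝕜 = ℂ` gives `mr₊^ℂ`): the minimum rank over all positive
semidefinite Hermitian matrices whose off-diagonal zero/nonzero pattern matches `G`. -/
noncomputable def mrPlus (𝕜 : Type) [RCLike 𝕜] {V : Type} [Fintype V] [DecidableEq V]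
    (G : SimpleGraph V) : ℕ :=
  sInf {r : ℕ | ∃ A : Matrix V V 𝕜, A.PosSemidef ∧
    (∀ i j : V, i ≠ j → (A i j ≠ 0 ↔ G.Adj i j)) ∧ A.rank = r}

/-- `G` is a frame graph in the `d`-dimensional inner product space over `𝕜`:
there is a spanning family (frame) `f` indexed by the vertices such that distinct
vertices are adjacent iff the corresponding vectors are non-orthogonal. -/
def IsFrameGraphIn (𝕜 : Type) [RCLike 𝕜] {V : Type} (G : SimpleGraph V) (d : ℕ) : Prop :=
  ∃ f : V → EuclideanSpace 𝕜 (Fin d),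
    Submodule.span 𝕜 (Set.range f) = ⊤ ∧
    ∀ i j : V, i ≠ j → ((inner 𝕜 (f i) (f j) : 𝕜) ≠ 0 ↔ G.Adj i j)

/-- The strong product of two simple graphs. -/
def strongProd {α β : Type} (G : SimpleGraph α) (H : SimpleGraph β) :
    SimpleGraph (α × β) where
  Adj x y := (x.1 = y.1 ∧ H.Adj x.2 y.2) ∨ (x.2 = y.2 ∧ G.Adj x.1 y.1) ∨
    (G.Adj x.1 y.1 ∧ H.Adj x.2 y.2)
  symm := by
    constructor
    rintro ⟨a, b⟩ ⟨c, d⟩ (⟨h1, h2⟩ | ⟨h1, h2⟩ | ⟨h1, h2⟩)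
    · exact Or.inl ⟨h1.symm, h2.symm⟩
    · exact Or.inr (Or.inl ⟨h1.symm, h2.symm⟩)
    · exact Or.inr (Or.inr ⟨h1.symm, h2.symm⟩)
  loopless := by
    constructor
    rintro ⟨a, b⟩ (⟨_, h⟩ | ⟨_, h⟩ | ⟨h, _⟩)
    · exact H.loopless.irrefl b h
    · exact G.loopless.irrefl a h
    · exact G.loopless.irrefl a h

/-- The join `G ∨ H` of two graphs with disjoint vertex sets. -/
def joinGraph {α β : Type} (G : SimpleGraph α) (H : SimpleGraph β) :
    SimpleGraph (α ⊕ β) where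
  Adj x y := match x, y with
    | Sum.inl a, Sum.inl b => G.Adj a b
    | Sum.inr a, Sum.inr b => H.Adj a b
    | Sum.inl _, Sum.inr _ => True
    | Sum.inr _, Sum.inl _ => True
  symm := by
    constructor
    rintro (a | a) (b | b) h
    · exact h.symm
    · trivial
    · trivial
    · exact h.symm
  loopless := by
    constructor
    rintro (a | a) h
    · exact G.loopless.irrefl a h
    · exact H.loopless.irrefl a h

/-- The vertex-sum `G · H` of `G` and `H`, obtained by identifying the vertex `a` of `G`
with the vertex `b` of `H` (and no other vertices or edges shared). -/
def vertexSum {α β : Type} (G : SimpleGraph α) (H : SimpleGraph β) (a : α) (b : β) :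
    SimpleGraph (α ⊕ {y : β // y ≠ b}) where
  Adj x y := match x, y with
    | Sum.inl u, Sum.inl u' => G.Adj u u'
    | Sum.inr v, Sum.inr v' => H.Adj v.1 v'.1
    | Sum.inl u, Sum.inr v => u = a ∧ H.Adj b v.1
    | Sum.inr v, Sum.inl u => u = a ∧ H.Adj b v.1
  symm := by
    constructor
    rintro (u | v) (u' | v') h
    · exact h.symm
    · exact h
    · exact h
    · exact h.symm
  loopless := by
    constructor
    rintro (u | v) h
    · exact G.loopless.irrefl u h
    · exact H.loopless.irrefl v.1 h

/-- The corona product `G ∘ H`: one copy of `G`, one copy of `H` for each vertex of `G`,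
with every vertex of the `i`-th copy of `H` joined to the `i`-th vertex of `G`. -/
def corona {α β : Type} (G : SimpleGraph α) (H : SimpleGraph β) :
    SimpleGraph (α ⊕ α × β) where
  Adj x y := match x, y with
    | Sum.inl u, Sum.inl u' => G.Adj u u'
    | Sum.inr p, Sum.inr q => p.1 = q.1 ∧ H.Adj p.2 q.2
    | Sum.inl u, Sum.inr p => u = p.1
    | Sum.inr p, Sum.inl u => u = p.1
  symm := by
    constructor
    rintro (u | p) (u' | q) h
    · exact h.symm
    · exact h
    · exact h
    · exact ⟨h.1.symm, h.2.symm⟩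
  loopless := by
    constructor
    rintro (u | p) h
    · exact G.loopless.irrefl u h
    · exact H.loopless.irrefl p.2 h.2

/-- `v : Fin m → V` is an OS-vertex set of `G`: the vertices are distinct, and for each `k`
there is `w` adjacent to `v k`, different from all `v l` with `l ≤ k`, and non-adjacent to
every `v l` (`l < k`) lying in the connected component of `v k` in the subgraph induced by
`{v 0, …, v k}`. -/
def IsOSSet {V : Type} (G : SimpleGraph V) {m : ℕ} (v : Fin m → V) : Prop :=
  Function.Injective v ∧
  ∀ k : Fin m, ∃ w : V,
    G.Adj (v k) w ∧
    (∀ l : Fin m, l ≤ k → w ≠ v l) ∧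
    ∀ l : Fin m, (hl : l < k) →
      (G.induce {x : V | ∃ l' : Fin m, l' ≤ k ∧ x = v l'}).Reachable
        ⟨v l, ⟨l, le_of_lt hl, rfl⟩⟩ ⟨v k, ⟨k, le_refl k, rfl⟩⟩ →
      ¬ G.Adj w (v l)

/-- The OS-number of `G`: the maximum cardinality of an OS-vertex set of `G`. -/
noncomputable def OSNumber {V : Type} (G : SimpleGraph V) : ℕ :=
  sSup {m : ℕ | ∃ v : Fin m → V, IsOSSet G v}

/-!
A positive semidefinite matrix is the Gram matrix of its columns, so `mrPlus 𝕜 G` is the least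
dimension of the span of vectors `x v` with `⟪x v, x w⟫ ≠ 0` exactly on the edges of `G`.

Upper bound: cover the edges of `K_n ∘ T` by the clique of apexes and, for every edge of every
copy of `T`, the triangle it spans with its apex; the 0/1 incidence vectors of these
`n (m - 1) + 1` cliques realise the graph.

Lower bound: deleting a leaf `ℓ` of a tree and projecting the other vectors orthogonally to
`x ℓ` keeps a representation of the smaller tree and loses a dimension, so a tree on `m`
vertices needs `m - 1` dimensions. The `n` copies of `T` span mutually orthogonal subspaces, and
an apex vector is orthogonal to every copy except its own; were it in their sum, it would lie in
its own copy, which is orthogonal to a second apex adjacent to it.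
-/

open Module Submodule Matrix
open scoped InnerProductSpace

def IsOrthRep (𝕜 : Type*) {V E : Type*} [RCLike 𝕜] [Inner 𝕜 E] (G : SimpleGraph V)
    (x : V → E) : Prop :=
  ∀ i j, i ≠ j → (⟪x i, x j⟫_𝕜 ≠ 0 ↔ G.Adj i j)

section Gram

variable {𝕜 : Type*} [RCLike 𝕜] {E : Type*} [NormedAddCommGroup E] [InnerProductSpace 𝕜 E]
  [FiniteDimensional 𝕜 E] {V : Type*} [Fintype V]

theorem Matrix.rank_gram (x : V → E) :
    (gram 𝕜 x).rank = finrank 𝕜 (span 𝕜 (Set.range x)) := by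
  let b := stdOrthonormalBasis 𝕜 E
  let e : E ≃ₗ[𝕜] (Fin (finrank 𝕜 E) → 𝕜) :=
    b.repr.toLinearEquiv.trans (WithLp.linearEquiv 2 𝕜 _)
  rw [gram_eq_conjTranspose_mul b, rank_conjTranspose_mul_self,
    rank_eq_finrank_span_cols, ← LinearEquiv.finrank_map_eq e, Submodule.map_span,
    ← Set.range_comp]
  rfl

end Gram

section MinimumRank

variable {𝕜 : Type} [RCLike 𝕜] {V : Type} [Fintype V] [DecidableEq V] {G : SimpleGraph V}
  {E : Type*} [NormedAddCommGroup E] [InnerProductSpace 𝕜 E]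

theorem mrPlus_le_finrank_span [FiniteDimensional 𝕜 E] {x : V → E} (hx : IsOrthRep 𝕜 G x) :
    mrPlus 𝕜 G ≤ finrank 𝕜 (span 𝕜 (Set.range x)) :=
  Nat.sInf_le ⟨gram 𝕜 x, posSemidef_gram 𝕜 x, hx, rank_gram x⟩

theorem exists_isOrthRep_finrank_span_eq_mrPlus {x : V → E} (hx : IsOrthRep 𝕜 G x) :
    ∃ y : V → EuclideanSpace 𝕜 V, IsOrthRep 𝕜 G y ∧
      finrank 𝕜 (span 𝕜 (Set.range y)) = mrPlus 𝕜 G := by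
  obtain ⟨A, hA, hpat, hrank⟩ := Nat.sInf_mem (⟨_, gram 𝕜 x, posSemidef_gram 𝕜 x, hx, rfl⟩ :
    ∃ r, ∃ A : Matrix V V 𝕜, A.PosSemidef ∧ (∀ i j, i ≠ j → (A i j ≠ 0 ↔ G.Adj i j)) ∧ A.rank = r)
  obtain ⟨B, rfl⟩ : ∃ B : Matrix V V 𝕜, A = Bᴴ * B := by
    open scoped MatrixOrder in
    exact CStarAlgebra.nonneg_iff_eq_star_mul_self.mp hA.nonneg
  let y : V → EuclideanSpace 𝕜 V := fun v => WithLp.toLp 2 (B.col v)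
  have hgram : gram 𝕜 y = Bᴴ * B :=
    gram_eq_conjTranspose_mul (EuclideanSpace.basisFun V 𝕜) y
  refine ⟨y, fun i j hij => ?_, ?_⟩
  · rw [← hpat i j hij, ← hgram]
    rfl
  · rw [← rank_gram, hgram, hrank]
    rfl

theorem mrPlus_eq_of_isOrthRep [FiniteDimensional 𝕜 E] {N : ℕ} {x : V → E} (hx : IsOrthRep 𝕜 G x)
    (hxN : finrank 𝕜 (span 𝕜 (Set.range x)) ≤ N)
    (hN : ∀ y : V → EuclideanSpace 𝕜 V, IsOrthRep 𝕜 G y → N ≤ finrank 𝕜 (span 𝕜 (Set.range y))) :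
    mrPlus 𝕜 G = N := by
  obtain ⟨y, hy, hyr⟩ := exists_isOrthRep_finrank_span_eq_mrPlus hx
  exact le_antisymm ((mrPlus_le_finrank_span hx).trans hxN) (hyr ▸ hN y hy)

end MinimumRank

section Incidence

variable {𝕜 : Type*} [RCLike 𝕜] {V ι : Type*} [Fintype ι] {G : SimpleGraph V}

theorem exists_isOrthRep_of_incidence (R : V → ι → Prop)
    (hR : ∀ v w, v ≠ w → ((∃ k, R v k ∧ R w k) ↔ G.Adj v w)) :
    ∃ x : V → EuclideanSpace 𝕜 ι, IsOrthRep 𝕜 G x := by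
  classical
  refine ⟨fun v => WithLp.toLp 2 fun k => if R v k then 1 else 0, fun v w hvw => ?_⟩
  rw [← hR v w hvw]
  simp [PiLp.inner_apply, ← ite_and, Finset.sum_boole]

end Incidence

section CoronaRepresentation

variable {𝕜 : Type*} [RCLike 𝕜] {α β : Type}

theorem exists_isOrthRep_corona_top [Fintype α] {H : SimpleGraph β} [Fintype H.edgeSet]
    (hH : ∀ t, ∃ s, H.Adj t s) :
    ∃ x : α ⊕ α × β → EuclideanSpace 𝕜 (Option (α × H.edgeSet)),
      IsOrthRep 𝕜 (corona (⊤ : SimpleGraph α) H) x := by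
  -- `k = none` is the clique of all apexes, `k = some (i, e)` the triangle formed by the edge `e`
  -- of the `i`-th copy of `H` and the `i`-th apex.
  refine exists_isOrthRep_of_incidence
    (fun v k => match v, k with
      | .inl _, none => True
      | .inl i, some (j, _) => i = j
      | .inr _, none => False
      | .inr (i, t), some (j, e) => i = j ∧ t ∈ (e : Sym2 β)) ?_
  have hinc : ∀ t, ∃ e ∈ H.edgeSet, t ∈ e := fun t =>
    let ⟨s, hs⟩ := hH t
    ⟨s(t, s), hs, Sym2.mem_mk_left t s⟩
  rintro (i | ⟨i, s⟩) (j | ⟨j, t⟩) hne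
  all_goals simp only [Option.exists, Prod.exists, Subtype.exists, corona]
  · simpa using hne
  · simp [hinc, eq_comm]
  · obtain ⟨e, he, hs⟩ := hinc s
    simp only [false_and, false_or]
    exact ⟨fun ⟨_, _, _, ⟨rfl, _⟩, h⟩ => h, fun h => ⟨i, e, he, ⟨rfl, hs⟩, h⟩⟩
  · have hst : i = j → s ≠ t := by rintro rfl rfl; exact hne rfl
    constructor
    · rintro (⟨⟨⟩, -⟩ | ⟨a, e, he, ⟨rfl, hs⟩, rfl, ht⟩)
      rw [(Sym2.mem_and_mem_iff (hst rfl)).mp ⟨hs, ht⟩] at he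
      exact ⟨rfl, he⟩
    · rintro ⟨rfl, h⟩
      exact .inr ⟨i, s(s, t), h, ⟨rfl, Sym2.mem_mk_left s t⟩, rfl, Sym2.mem_mk_right s t⟩

end CoronaRepresentation

section OrthogonalSubmodules

variable {𝕜 E : Type*} [RCLike 𝕜] [NormedAddCommGroup E] [InnerProductSpace 𝕜 E]

theorem Submodule.mem_of_mem_sup_of_mem_orthogonal {K L : Submodule 𝕜 E} (hKL : K ⟂ L) {v : E}
    (hv : v ∈ K ⊔ L) (hvL : v ∈ Lᗮ) : v ∈ K := by
  obtain ⟨k, hk, l, hl, rfl⟩ := mem_sup.mp hv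
  have hl' : l ∈ Lᗮ := by simpa using sub_mem hvL (hKL hk)
  rwa [inner_self_eq_zero.mp (hl' l hl), add_zero]

theorem Submodule.finrank_iSup_eq_sum_of_pairwise_isOrtho [FiniteDimensional 𝕜 E] {ι : Type*}
    [Fintype ι] {S : ι → Submodule 𝕜 E} (hS : Pairwise (S · ⟂ S ·)) :
    finrank 𝕜 ↥(⨆ i, S i) = ∑ i, finrank 𝕜 (S i) := by
  classical
  suffices ∀ s : Finset ι, finrank 𝕜 ↥(⨆ i ∈ s, S i) = ∑ i ∈ s, finrank 𝕜 (S i) by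
    rw [← this, show ⨆ i ∈ Finset.univ, S i = ⨆ i, S i by simp]
  intro s
  induction s using Finset.induction_on with
  | empty => simp
  | insert a s ha ih =>
    have hdisj : Disjoint (S a) (⨆ i ∈ s, S i) := IsOrtho.disjoint <| isOrtho_iSup_right.mpr
      fun i => isOrtho_iSup_right.mpr fun hi => hS (ne_of_mem_of_not_mem hi ha).symm
    rw [Finset.iSup_insert, Finset.sum_insert ha, ← ih, ← finrank_sup_add_finrank_inf_eq,
      hdisj.eq_bot, finrank_bot, add_zero]

end OrthogonalSubmodules

section Trees

variable {𝕜 E : Type*} [RCLike 𝕜] [NormedAddCommGroup E] [InnerProductSpace 𝕜 E]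
  [FiniteDimensional 𝕜 E] {V : Type*}

theorem IsOrthRep.exists_induce_compl_singleton_finrank_lt {G : SimpleGraph V} {x : V → E}
    (hx : IsOrthRep 𝕜 G x) {ℓ p : V} (hp : G.Adj ℓ p) (hℓ : ∀ q, G.Adj ℓ q → q = p) :
    ∃ y : ({ℓ}ᶜ : Set V) → E, IsOrthRep 𝕜 (G.induce {ℓ}ᶜ) y ∧
      finrank 𝕜 (span 𝕜 (Set.range y)) < finrank 𝕜 (span 𝕜 (Set.range x)) := by
  set K := (𝕜 ∙ x ℓ)ᗮ
  have hxℓ : x ℓ ∉ K := by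
    rw [mem_orthogonal_singleton_iff_inner_right, inner_self_eq_zero]
    intro h0
    exact (hx ℓ p hp.ne).mpr hp (by rw [h0, inner_zero_left])
  have hxK : ∀ v, v ≠ ℓ → v ≠ p → x v ∈ K := fun v hvℓ hvp =>
    mem_orthogonal_singleton_iff_inner_right.mpr <|
      not_not.mp fun h => hvp (hℓ v ((hx ℓ v (Ne.symm hvℓ)).mp h))
  have hinner : ∀ v w : ({ℓ}ᶜ : Set V), v ≠ w →
      ⟪K.starProjection (x v), K.starProjection (x w)⟫_𝕜 = ⟪x v, x w⟫_𝕜 := by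
    intro v w hvw
    have hfix : ∀ u : ({ℓ}ᶜ : Set V), u.1 ≠ p → K.starProjection (x u) = x u := fun u hu =>
      starProjection_eq_self_iff.mpr (hxK u u.2 hu)
    by_cases hv : v.1 = p
    · have hw : w.1 ≠ p := fun hw => hvw (Subtype.ext (hv.trans hw.symm))
      rw [hfix w hw, inner_starProjection_left_eq_right, hfix w hw]
    · rw [hfix v hv, ← inner_starProjection_left_eq_right, hfix v hv]
  refine ⟨fun v => K.starProjection (x v), fun v w hvw => ?_, ?_⟩
  · rw [hinner v w hvw]
    exact hx v w (Subtype.coe_injective.ne hvw)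
  · refine finrank_lt_finrank_of_lt (lt_of_le_of_ne (span_le.mpr ?_) fun h => hxℓ ?_)
    · rintro _ ⟨v, rfl⟩
      change (𝕜 ∙ x ℓ)ᗮ.starProjection (x v) ∈ _
      rw [starProjection_orthogonal_val]
      exact sub_mem (subset_span ⟨v, rfl⟩)
        ((span_singleton_le_iff_mem _ _).mpr (subset_span (Set.mem_range_self ℓ))
          (starProjection_apply_mem _ _))
    · have hy : span 𝕜 (Set.range fun v : ({ℓ}ᶜ : Set V) => K.starProjection (x v)) ≤ K :=
        span_le.mpr (Set.range_subset_iff.mpr fun v => starProjection_apply_mem K (x v))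
      exact hy (h ▸ subset_span ⟨ℓ, rfl⟩)

theorem IsOrthRep.card_sub_one_le_finrank_span_of_isTree [Fintype V] {T : SimpleGraph V}
    (hT : T.IsTree) {x : V → E} (hx : IsOrthRep 𝕜 T x) :
    Fintype.card V - 1 ≤ finrank 𝕜 (span 𝕜 (Set.range x)) := by
  induction h : Fintype.card V generalizing V with
  | zero => simp
  | succ n ih =>
    rcases subsingleton_or_nontrivial V with hV | hV
    · have := Fintype.card_le_one_iff_subsingleton.mpr hV
      omega
    classical
    obtain ⟨ℓ, hℓ⟩ := hT.exists_vert_degree_one_of_nontrivial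
    obtain ⟨p, hp, huniq⟩ := SimpleGraph.degree_eq_one_iff_existsUnique_adj.mp hℓ
    obtain ⟨y, hy, hlt⟩ := hx.exists_induce_compl_singleton_finrank_lt hp huniq
    have hT' : (T.induce {ℓ}ᶜ).IsTree :=
      ⟨hT.connected.induce_compl_singleton_of_degree_eq_one hℓ, hT.isAcyclic.induce _⟩
    have := ih hT' hy (by rw [Fintype.card_compl_set, h, Fintype.card_unique]; rfl)
    omega

end Trees

section CoronaLowerBound

variable {𝕜 E : Type*} [RCLike 𝕜] [NormedAddCommGroup E] [InnerProductSpace 𝕜 E]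
  {α β : Type} {G : SimpleGraph α} {H : SimpleGraph β} {x : α ⊕ α × β → E}

theorem IsOrthRep.corona_copy (hx : IsOrthRep 𝕜 (corona G H) x) (i : α) :
    IsOrthRep 𝕜 H fun t => x (.inr (i, t)) := fun s t hst =>
  (hx _ _ (by simpa using hst)).trans ⟨And.right, fun h => ⟨rfl, h⟩⟩

theorem IsOrthRep.sum_finrank_copy_lt [FiniteDimensional 𝕜 E] [Fintype α]
    (hx : IsOrthRep 𝕜 (corona G H) x) {a b : α} (hab : G.Adj a b) :
    ∑ i, finrank 𝕜 (span 𝕜 (Set.range fun t => x (.inr (i, t)))) <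
      finrank 𝕜 (span 𝕜 (Set.range x)) := by
  set S : α → Submodule 𝕜 E := fun i => span 𝕜 (Set.range fun t => x (.inr (i, t)))
  have hS : Pairwise (S · ⟂ S ·) := by
    intro i j hij
    refine isOrtho_span.mpr ?_
    rintro _ ⟨s, rfl⟩ _ ⟨t, rfl⟩
    by_contra h
    exact hij ((hx _ _ (by simp [hij])).mp h).1
  have hapex : ∀ i j, i ≠ j → (𝕜 ∙ x (.inl i)) ⟂ S j := by
    intro i j hij
    refine isOrtho_span.mpr ?_
    rintro _ rfl _ ⟨t, rfl⟩
    by_contra h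
    exact hij ((hx _ _ Sum.inl_ne_inr).mp h)
  rw [← finrank_iSup_eq_sum_of_pairwise_isOrtho hS]
  refine finrank_lt_finrank_of_lt (lt_of_le_of_ne ?_ fun h => ?_)
  · exact iSup_le fun i => span_mono (Set.range_comp_subset_range _ x)
  · have hmem : x (.inl a) ∈ S a ⊔ ⨆ (j) (_ : j ≠ a), S j := by
      rw [← iSup_split_single S a, h]
      exact subset_span ⟨_, rfl⟩
    have hxa : x (.inl a) ∈ S a := by
      refine mem_of_mem_sup_of_mem_orthogonal ?_ hmem ?_
      · exact isOrtho_iSup_right.mpr fun j => isOrtho_iSup_right.mpr fun hj => hS (Ne.symm hj)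
      · exact isOrtho_iSup_right.mpr (fun j => isOrtho_iSup_right.mpr fun hj =>
          hapex a j (Ne.symm hj)) (mem_span_singleton_self _)
    exact (hx (.inl a) (.inl b) (by simp [hab.ne])).mpr hab
      (hapex b a hab.ne.symm (mem_span_singleton_self _) _ hxa)

theorem IsOrthRep.card_mul_add_one_le_finrank_span_corona_top [FiniteDimensional 𝕜 E]
    [Fintype α] [Nontrivial α] [Fintype β] (hH : H.IsTree)
    (hx : IsOrthRep 𝕜 (corona (⊤ : SimpleGraph α) H) x) :
    Fintype.card α * (Fintype.card β - 1) + 1 ≤ finrank 𝕜 (span 𝕜 (Set.range x)) := by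
  obtain ⟨a, b, hab⟩ := exists_pair_ne α
  calc Fintype.card α * (Fintype.card β - 1) + 1
      = ∑ _ : α, (Fintype.card β - 1) + 1 := by simp
    _ ≤ ∑ i, finrank 𝕜 (span 𝕜 (Set.range fun t => x (.inr (i, t)))) + 1 := by
      gcongr with i
      exact (hx.corona_copy i).card_sub_one_le_finrank_span_of_isTree hH
    _ ≤ finrank 𝕜 (span 𝕜 (Set.range x)) := hx.sum_finrank_copy_lt (G := ⊤) hab

end CoronaLowerBound

theorem mrPlus_corona_top_of_isTree {𝕜 : Type} [RCLike 𝕜] {α β : Type} [Fintype α]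
    [DecidableEq α] [Nontrivial α] [Fintype β] [DecidableEq β] [Nontrivial β]
    {T : SimpleGraph β} (hT : T.IsTree) :
    mrPlus 𝕜 (corona (⊤ : SimpleGraph α) T) = Fintype.card α * (Fintype.card β - 1) + 1 := by
  classical
  obtain ⟨x, hx⟩ := exists_isOrthRep_corona_top (𝕜 := 𝕜) (α := α) fun t =>
    T.mem_support.mp (hT.connected.preconnected.support_eq_univ ▸ Set.mem_univ t)
  refine mrPlus_eq_of_isOrthRep hx ?_ fun y hy =>
    hy.card_mul_add_one_le_finrank_span_corona_top hT
  calc finrank 𝕜 (span 𝕜 (Set.range x)) ≤ Fintype.card (Option (α × T.edgeSet)) :=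
        (Submodule.finrank_le _).trans_eq finrank_euclideanSpace
    _ = Fintype.card α * (Fintype.card β - 1) + 1 := by
      rw [Fintype.card_option, Fintype.card_prod, ← hT.card_edgeFinset,
        SimpleGraph.edgeFinset_card, Nat.add_sub_cancel]

/-- for a tree `T` of order `m ≥ 2` and `n ≥ 2`,
`mr₊(K_n ∘ T) = nm − n + 1`. -/
theorem mrPlus_corona_complete_tree (m n : ℕ) (hm : 2 ≤ m) (hn : 2 ≤ n)
    (T : SimpleGraph (Fin m)) (hT : T.IsTree) :
    mrPlus ℝ (corona (⊤ : SimpleGraph (Fin n)) T) = n * m - n + 1 ∧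
    mrPlus ℂ (corona (⊤ : SimpleGraph (Fin n)) T) = n * m - n + 1 := by
  have : Nontrivial (Fin m) := Fin.nontrivial_iff_two_le.mpr hm
  have : Nontrivial (Fin n) := Fin.nontrivial_iff_two_le.mpr hn
  have hcard : n * m - n + 1 = Fintype.card (Fin n) * (Fintype.card (Fin m) - 1) + 1 := by
    simp [Nat.mul_sub_one]
  rw [hcard]
  exact ⟨mrPlus_corona_top_of_isTree hT, mrPlus_corona_top_of_isTree hT⟩
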